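/- The h-shuffle preserves the uniform measure: for every injective a : ℕ → ℕ and every hash h : 2^{<ω} → Bool, the pushforward of μ under the h-shuffle f equals μ, i.e. μ(f⁻¹(⟦τ⟧)) = 2^{−|τ|} for every finite binary string τ, and hence Measure.map f μ = μ. -/

import Mathlib

open MeasureTheory

/-- The length-`n` prefix of a real `x : ℕ → Bool`, as a finite binary string. -/
def pre (x : ℕ → Bool) (n : ℕ) : List Bool := (List.range n).map x

/-- The `h`-shuffle determined by the enumeration `a` and the hash `h`:
`f(x)(i) = x(a i) XOR h(x↾(a i))`. -/
def shuffle (a : ℕ → ℕ) (h : List Bool → Bool) (x : ℕ → Bool) : ℕ → Bool :=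
  fun i => xor (x (a i)) (h (pre x (a i)))

/-- The basic cylinder `⟦σ⟧ = {x : σ ≺ x}` determined by a finite binary string `σ`. -/
def cyl (σ : List Bool) : Set (ℕ → Bool) := {x | pre x σ.length = σ}

@[simp] lemma pre_length (x : ℕ → Bool) (n : ℕ) : (pre x n).length = n := by
  simp [pre]

@[simp] lemma pre_getElem (x : ℕ → Bool) (n j : ℕ) (hj : j < (pre x n).length) :
    (pre x n)[j] = x j := by
  simp [pre]

lemma pre_eq_iff (x : ℕ → Bool) (σ : List Bool) {n : ℕ} (hn : n = σ.length) :
    pre x n = σ ↔ ∀ j (hj : j < σ.length), x j = σ[j] := by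
  subst hn
  constructor
  · intro hp j hj
    have h2 := List.getElem_of_eq hp.symm hj
    rw [pre_getElem] at h2
    exact h2.symm
  · intro H
    apply List.ext_getElem (by simp)
    intro j h1 h2; simp [H j h2]

lemma mem_cyl (σ : List Bool) (x : ℕ → Bool) :
    x ∈ cyl σ ↔ ∀ j (hj : j < σ.length), x j = σ[j] := pre_eq_iff x σ rfl

lemma cyl_nil : cyl ([] : List Bool) = Set.univ := by
  ext x; simp [mem_cyl]

lemma measurableSet_coord (j : ℕ) (b : Bool) :
    MeasurableSet {x : ℕ → Bool | x j = b} := by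
  have : {x : ℕ → Bool | x j = b} = (fun x : ℕ → Bool => x j) ⁻¹' {b} := rfl
  rw [this]
  exact measurable_pi_apply j (measurableSet_singleton b)

lemma measurableSet_cyl (σ : List Bool) : MeasurableSet (cyl σ) := by
  have : cyl σ = ⋂ j ∈ Finset.range σ.length, {x : ℕ → Bool | x j = σ.getD j false} := by
    ext x
    simp only [mem_cyl, Set.mem_iInter, Finset.mem_range, Set.mem_setOf_eq]
    constructor
    · intro H j hj; rw [List.getD_eq_getElem _ _ hj]; exact H j hj
    · intro H j hj; rw [← List.getD_eq_getElem _ _ hj]; exact H j hj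
  rw [this]
  exact MeasurableSet.biInter (Finset.range σ.length).countable_toSet
    (fun j _ => measurableSet_coord j _)

lemma pre_succ (x : ℕ → Bool) (n : ℕ) : pre x (n + 1) = pre x n ++ [x n] := by
  simp [pre, List.range_succ]

lemma coordSet_mem (i : ℕ) (b : Bool) :
    MeasurableSet[MeasurableSpace.generateFrom {S | ∃ σ : List Bool, S = cyl σ}]
      {x : ℕ → Bool | x i = b} := by
  have : {x : ℕ → Bool | x i = b}
      = ⋃ σ : {σ : List Bool // σ.length = i}, cyl (σ.1 ++ [b]) := by
    ext x
    simp only [Set.mem_setOf_eq, Set.mem_iUnion]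
    constructor
    · intro hx
      refine ⟨⟨pre x i, pre_length x i⟩, ?_⟩
      rw [mem_cyl]
      intro j hj
      simp only [List.length_append, pre_length, List.length_singleton] at hj
      rcases Nat.lt_succ_iff_lt_or_eq.mp hj with hj' | hj'
      · rw [List.getElem_append_left (by simpa using hj')]; simp
      · subst hj'; rw [List.getElem_append_right (by simp)]; simp [hx]
    · rintro ⟨⟨σ, hσ⟩, hx⟩
      rw [mem_cyl] at hx
      have := hx i (by simp [hσ])
      rw [List.getElem_append_right (by simp [hσ])] at this
      simpa [hσ] using this
  rw [this]
  exact MeasurableSet.iUnion fun σ =>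
    MeasurableSpace.measurableSet_generateFrom ⟨_, rfl⟩

lemma generateFrom_cyl :
    (inferInstance : MeasurableSpace (ℕ → Bool)) =
      MeasurableSpace.generateFrom {S | ∃ σ : List Bool, S = cyl σ} := by
  apply le_antisymm
  · rw [show (inferInstance : MeasurableSpace (ℕ → Bool)) = MeasurableSpace.pi from rfl,
      MeasurableSpace.pi]
    apply iSup_le
    intro i
    intro t ht
    rw [MeasurableSpace.measurableSet_comap] at ht
    obtain ⟨s, -, rfl⟩ := ht
    have : (fun x : ℕ → Bool => x i) ⁻¹' s = ⋃ b ∈ s, {x : ℕ → Bool | x i = b} := by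
      ext x; simp
    rw [this]
    exact MeasurableSet.biUnion s.to_countable (fun b _ => coordSet_mem i b)
  · apply MeasurableSpace.generateFrom_le
    rintro S ⟨σ, rfl⟩
    exact measurableSet_cyl σ

lemma isPiSystem_cyl : IsPiSystem {S : Set (ℕ → Bool) | ∃ σ : List Bool, S = cyl σ} := by
  rintro S ⟨σ, rfl⟩ T ⟨τ, rfl⟩ ⟨x, hxσ, hxτ⟩
  rw [mem_cyl] at hxσ hxτ
  rcases le_total σ.length τ.length with hle | hle
  · refine ⟨τ, ?_⟩
    apply Set.eq_of_subset_of_subset Set.inter_subset_right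
    intro y hy
    refine ⟨?_, hy⟩
    rw [mem_cyl] at hy ⊢
    intro j hj
    rw [hy j (lt_of_lt_of_le hj hle), ← hxτ j (lt_of_lt_of_le hj hle)]
    exact hxσ j hj
  · refine ⟨σ, ?_⟩
    apply Set.eq_of_subset_of_subset Set.inter_subset_left
    intro y hy
    refine ⟨hy, ?_⟩
    rw [mem_cyl] at hy ⊢
    intro j hj
    rw [hy j (lt_of_lt_of_le hj hle), ← hxσ j (lt_of_lt_of_le hj hle)]
    exact hxτ j hj

lemma ext_cyl (μ ν : Measure (ℕ → Bool))
    (hμ : ∀ σ : List Bool, μ (cyl σ) = (1 / 2 : ENNReal) ^ σ.length)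
    (hν : ∀ σ : List Bool, ν (cyl σ) = (1 / 2 : ENNReal) ^ σ.length) : μ = ν := by
  haveI : IsFiniteMeasure μ := ⟨by rw [← cyl_nil, hμ]; simp⟩
  apply ext_of_generate_finite _ generateFrom_cyl isPiSystem_cyl
  · rintro S ⟨σ, rfl⟩
    rw [hμ, hν]
  · rw [← cyl_nil, hμ, hν]

def bitflip (m : ℕ) (x : ℕ → Bool) : ℕ → Bool := Function.update x m (!x m)

lemma bitflip_self (m : ℕ) (x : ℕ → Bool) : bitflip m x m = !x m := by
  unfold bitflip; exact Function.update_self m (!x m) x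

lemma bitflip_ne (m : ℕ) (x : ℕ → Bool) {j : ℕ} (hjm : j ≠ m) : bitflip m x j = x j := by
  unfold bitflip; exact Function.update_of_ne hjm (!x m) x

lemma measurable_bitflip (m : ℕ) : Measurable (bitflip m) := by
  rw [measurable_pi_iff]
  intro j
  by_cases hj : j = m
  · subst hj
    apply measurable_to_countable
    intro y
    have : (fun x : ℕ → Bool => bitflip j x j) ⁻¹' {bitflip j y j}
        = {x : ℕ → Bool | x j = y j} := by
      ext x
      simp only [Set.mem_preimage, Set.mem_singleton_iff, Set.mem_setOf_eq, bitflip_self]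
      constructor
      · intro hh; rw [← Bool.not_not (x j), hh, Bool.not_not]
      · intro hh; rw [hh]
    rw [this]; exact measurableSet_coord j _
  · have : (fun x : ℕ → Bool => bitflip m x j) = fun x : ℕ → Bool => x j := by
      funext x; exact bitflip_ne m x hj
    rw [this]; exact measurable_pi_apply j

lemma map_bitflip (m : ℕ) (μ : Measure (ℕ → Bool))
    (hμ : ∀ σ : List Bool, μ (cyl σ) = (1 / 2 : ENNReal) ^ σ.length) :
    Measure.map (bitflip m) μ = μ := by
  apply ext_cyl _ _ _ hμ
  intro σ
  rw [Measure.map_apply (measurable_bitflip m) (measurableSet_cyl σ)]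
  have key : ∀ (x : ℕ → Bool) (j : ℕ) (hj : j < σ.length),
      (bitflip m x j = σ[j]) ↔
      (x j = (σ.set m (!σ.getD m false))[j]'(by simpa using hj)) := by
    intro x j hj
    rw [List.getElem_set]
    by_cases hjm : j = m
    · subst hjm
      rw [bitflip_self, if_pos rfl, List.getD_eq_getElem _ _ hj]
      constructor
      · intro hh; rw [← hh, Bool.not_not]
      · intro hh; rw [hh, Bool.not_not]
    · rw [bitflip_ne m x hjm, if_neg (fun hh => hjm hh.symm)]
  have hset : bitflip m ⁻¹' cyl σ = cyl (σ.set m (!σ.getD m false)) := by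
    ext x
    simp only [Set.mem_preimage, mem_cyl, List.length_set]
    constructor
    · intro H j hj; exact (key x j hj).mp (H j hj)
    · intro H j hj; exact (key x j hj).mpr (H j hj)
  rw [hset, hμ]
  simp

lemma measurableSet_pinned (s : Finset ℕ) (v : ℕ → Bool) :
    MeasurableSet {x : ℕ → Bool | ∀ j ∈ s, x j = v j} := by
  have : {x : ℕ → Bool | ∀ j ∈ s, x j = v j}
      = ⋂ j ∈ s, {x : ℕ → Bool | x j = v j} := by
    ext x; simp
  rw [this]
  exact MeasurableSet.biInter s.countable_toSet (fun j _ => measurableSet_coord j _)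

lemma pinned (μ : Measure (ℕ → Bool))
    (hμ : ∀ σ : List Bool, μ (cyl σ) = (1 / 2 : ENNReal) ^ σ.length)
    (s : Finset ℕ) (v : ℕ → Bool) :
    μ {x : ℕ → Bool | ∀ j ∈ s, x j = v j} = (1 / 2 : ENNReal) ^ s.card := by
  induction s using Finset.strongInduction with
  | _ s IH =>
    rcases Finset.eq_empty_or_nonempty s with rfl | hne
    · simp only [Finset.notMem_empty, false_implies, implies_true, Set.setOf_true,
        Finset.card_empty, pow_zero]
      rw [← cyl_nil, hμ]; simp
    · set m := s.max' hne with hm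
      have hmem : m ∈ s := s.max'_mem hne
      set s' := s.erase m with hs'
      have hsub : s' ⊂ s := Finset.erase_ssubset hmem
      have hIH := IH s' hsub
      set P := {x : ℕ → Bool | ∀ j ∈ s', x j = v j} with hP
      have hPm : MeasurableSet P := measurableSet_pinned s' v
      set S : Bool → Set (ℕ → Bool) := fun b => P ∩ {x | x m = b} with hS
      have hSm : ∀ b, MeasurableSet (S b) := fun b => hPm.inter (measurableSet_coord m b)
      have htarget : {x : ℕ → Bool | ∀ j ∈ s, x j = v j} = S (v m) := by
        ext x
        simp only [hS, hP, Set.mem_inter_iff, Set.mem_setOf_eq]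
        constructor
        · intro H
          exact ⟨fun j hj => H j (Finset.mem_of_mem_erase hj), H m hmem⟩
        · rintro ⟨H1, H2⟩ j hj
          by_cases hjm : j = m
          · subst hjm; exact H2
          · exact H1 j (Finset.mem_erase.mpr ⟨hjm, hj⟩)
      have hflip : ∀ b, bitflip m ⁻¹' S b = S (!b) := by
        intro b
        ext x
        simp only [hS, hP, Set.mem_preimage, Set.mem_inter_iff, Set.mem_setOf_eq]
        constructor
        · rintro ⟨H1, H2⟩
          rw [bitflip_self] at H2
          refine ⟨fun j hj => ?_, by rw [← H2, Bool.not_not]⟩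
          have := H1 j hj
          rwa [bitflip_ne m x (Finset.mem_erase.mp hj).1] at this
        · rintro ⟨H1, H2⟩
          refine ⟨fun j hj => ?_, ?_⟩
          · rw [bitflip_ne m x (Finset.mem_erase.mp hj).1]; exact H1 j hj
          · rw [bitflip_self, H2, Bool.not_not]
      have hswap : μ (S (v m)) = μ (S (!v m)) := by
        conv_lhs => rw [show μ (S (v m)) = (Measure.map (bitflip m) μ) (S (v m)) by
          rw [map_bitflip m μ hμ]]
        rw [Measure.map_apply (measurable_bitflip m) (hSm _), hflip]
      have hunion : S (v m) ∪ S (!v m) = P := by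
        ext x
        simp only [hS, Set.mem_union, Set.mem_inter_iff, Set.mem_setOf_eq]
        constructor
        · rintro (⟨H, -⟩ | ⟨H, -⟩) <;> exact H
        · intro H
          rcases Bool.eq_or_eq_not (x m) (v m) with hb | hb
          · exact Or.inl ⟨H, hb⟩
          · exact Or.inr ⟨H, hb⟩
      have hdisj : Disjoint (S (v m)) (S (!v m)) := by
        rw [Set.disjoint_iff]
        rintro x ⟨⟨-, h1⟩, ⟨-, h2⟩⟩
        simp only [Set.mem_setOf_eq] at h1 h2
        rw [h1] at h2
        exact absurd h2 (by simp)
      have hsum : μ (S (v m)) + μ (S (!v m)) = μ P := by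
        rw [← measure_union hdisj (hSm _), hunion]
      rw [← hswap, hIH] at hsum
      have hpos : 0 < s.card := Finset.card_pos.mpr hne
      have hcard : s.card = s'.card + 1 := by
        rw [hs', Finset.card_erase_of_mem hmem]; omega
      have h2 : (2 : ENNReal) * μ (S (v m)) = (1 / 2 : ENNReal) ^ s'.card := by
        rw [two_mul]; exact hsum
      have hval : μ (S (v m)) = (1 / 2 : ENNReal) ^ s'.card / 2 := by
        rw [ENNReal.eq_div_iff (by norm_num) (by norm_num)]
        exact h2
      rw [htarget, hcard, hval, pow_succ, div_eq_mul_inv, one_div]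


def gmap (h : List Bool → Bool) (x : ℕ → Bool) : ℕ → Bool :=
  fun j => xor (x j) (h (pre x j))

lemma measurable_hpre (h : List Bool → Bool) (j : ℕ) :
    Measurable (fun x : ℕ → Bool => h (pre x j)) := by
  apply measurable_to_countable
  intro y
  have : (fun x : ℕ → Bool => h (pre x j)) ⁻¹' {h (pre y j)}
      = ⋃ σ : {σ : List Bool // σ.length = j ∧ h σ = h (pre y j)}, cyl σ.1 := by
    ext x
    simp only [Set.mem_preimage, Set.mem_singleton_iff, Set.mem_iUnion]
    constructor
    · intro hx
      exact ⟨⟨pre x j, pre_length x j, hx⟩, by simp [cyl]⟩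
    · rintro ⟨⟨σ, hlen, hh⟩, hx⟩
      have hxx : pre x j = σ := by rw [← hlen]; exact hx
      rw [hxx]; exact hh
  rw [this]
  exact MeasurableSet.iUnion fun σ => measurableSet_cyl σ.1

lemma measurable_gmap (h : List Bool → Bool) : Measurable (gmap h) := by
  rw [measurable_pi_iff]
  intro j
  have : (fun x : ℕ → Bool => gmap h x j)
      = (fun p : Bool × Bool => xor p.1 p.2) ∘ (fun x : ℕ → Bool => (x j, h (pre x j))) := rfl
  rw [this]
  exact Measurable.of_discrete.comp ((measurable_pi_apply j).prodMk (measurable_hpre h j))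

def ufun (h : List Bool → Bool) (σ : List Bool) : ℕ → Bool
  | j => xor (σ.getD j false) (h ((List.range j).attach.map (fun i => ufun h σ i.1)))
  termination_by j => j
  decreasing_by exact List.mem_range.mp i.2

lemma ufun_eq (h : List Bool → Bool) (σ : List Bool) (j : ℕ) :
    ufun h σ j = xor (σ.getD j false) (h (pre (ufun h σ) j)) := by
  rw [ufun]
  congr 2
  rw [pre]
  exact List.attach_map_val

lemma gmap_preimage_cyl (h : List Bool → Bool) (σ : List Bool) :
    gmap h ⁻¹' cyl σ = cyl (pre (ufun h σ) σ.length) := by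
  ext x
  rw [Set.mem_preimage, mem_cyl, mem_cyl]
  constructor
  · intro H
    have main : ∀ j, j < σ.length → x j = ufun h σ j := by
      intro j
      induction j using Nat.strong_induction_on with
      | _ j IH2 =>
        intro hj
        have hpre : pre x j = pre (ufun h σ) j := by
          apply List.ext_getElem (by simp)
          intro i h1 h2
          rw [pre_getElem, pre_getElem]
          exact IH2 i (by simpa using h1) (lt_trans (by simpa using h1) hj)
        have hgx : xor (x j) (h (pre x j)) = σ[j] := H j hj
        rw [ufun_eq, ← hpre, List.getD_eq_getElem _ _ hj, ← hgx]
        simp [Bool.xor_assoc]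
    intro j hj
    have hj' : j < σ.length := by simpa using hj
    rw [pre_getElem]
    exact main j hj'
  · intro H
    have hx : ∀ j, j < σ.length → x j = ufun h σ j := by
      intro j hj
      have := H j (by simpa using hj)
      rwa [pre_getElem] at this
    intro j hj
    have hpre : pre x j = pre (ufun h σ) j := by
      apply List.ext_getElem (by simp)
      intro i h1 h2
      rw [pre_getElem, pre_getElem]
      exact hx i (lt_trans (by simpa using h1) hj)
    show xor (x j) (h (pre x j)) = σ[j]
    rw [hx j hj, hpre, ufun_eq, List.getD_eq_getElem _ _ hj]
    simp [Bool.xor_assoc]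

def proj (a : ℕ → ℕ) (x : ℕ → Bool) : ℕ → Bool := fun i => x (a i)

lemma measurable_proj (a : ℕ → ℕ) : Measurable (proj a) := by
  rw [measurable_pi_iff]
  intro i
  exact measurable_pi_apply (a i)

lemma proj_preimage (a : ℕ → ℕ) (ha : Function.Injective a) (τ : List Bool) :
    proj a ⁻¹' cyl τ =
      {x : ℕ → Bool | ∀ j ∈ (Finset.range τ.length).image a,
        x j = τ.getD (Function.invFun a j) false} := by
  ext x
  rw [Set.mem_preimage, mem_cyl]
  simp only [Set.mem_setOf_eq, Finset.mem_image, Finset.mem_range]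
  constructor
  · rintro H j ⟨i, hi, rfl⟩
    have hinv : Function.invFun a (a i) = i := Function.leftInverse_invFun ha i
    rw [hinv, List.getD_eq_getElem _ _ hi]
    exact H i hi
  · intro H i hi
    have := H (a i) ⟨i, hi, rfl⟩
    have hinv : Function.invFun a (a i) = i := Function.leftInverse_invFun ha i
    rw [hinv, List.getD_eq_getElem _ _ hi] at this
    exact this

/-- The `h`-shuffle preserves the uniform measure `μ` on Cantor space:
`μ(f⁻¹⟦τ⟧) = 2^{-|τ|}` for every string `τ`, and `Measure.map f μ = μ`. -/
theorem shuffle_measurePreserving (a : ℕ → ℕ) (ha : Function.Injective a)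
    (h : List Bool → Bool) (μ : Measure (ℕ → Bool))
    (hμ : ∀ σ : List Bool, μ (cyl σ) = (1 / 2 : ENNReal) ^ σ.length) :
    (∀ τ : List Bool, μ (shuffle a h ⁻¹' cyl τ) = (1 / 2 : ENNReal) ^ τ.length) ∧
    Measure.map (shuffle a h) μ = μ := by
  have hmg : Measurable (gmap h) := measurable_gmap h
  have hmp : Measurable (proj a) := measurable_proj a
  have hshuf : shuffle a h = proj a ∘ gmap h := rfl
  have hmapg : Measure.map (gmap h) μ = μ := by
    apply ext_cyl _ _ _ hμ
    intro σ
    rw [Measure.map_apply hmg (measurableSet_cyl σ), gmap_preimage_cyl, hμ]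
    simp
  have hfirst : ∀ τ : List Bool,
      μ (shuffle a h ⁻¹' cyl τ) = (1 / 2 : ENNReal) ^ τ.length := by
    intro τ
    have hsplit : shuffle a h ⁻¹' cyl τ = gmap h ⁻¹' (proj a ⁻¹' cyl τ) := by
      rw [hshuf, Set.preimage_comp]
    have hmeas : MeasurableSet (proj a ⁻¹' cyl τ) := hmp (measurableSet_cyl τ)
    rw [hsplit, show μ (gmap h ⁻¹' (proj a ⁻¹' cyl τ))
        = (Measure.map (gmap h) μ) (proj a ⁻¹' cyl τ) from
        (Measure.map_apply hmg hmeas).symm,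
      hmapg, proj_preimage a ha τ, pinned μ hμ,
      Finset.card_image_of_injective _ ha, Finset.card_range]
  refine ⟨hfirst, ?_⟩
  apply ext_cyl _ _ _ hμ
  intro σ
  rw [Measure.map_apply (by rw [hshuf]; exact hmp.comp hmg) (measurableSet_cyl σ)]
  exact hfirst σ
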